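/- Consistency of empirical-loss minimizers: for each i, let ℓᵢ : ℝ^{nᵢ} × ℝ^{nᵢ} → ℝ be continuous and nonnegative, with ℓᵢ(a,b)=0 iff a=b, and let the surrogate f̂ᵢ(x₋ᵢ,θᵢ) be continuous in both arguments with the pointwise-matching property: for every (xᵢ,x₋ᵢ) ∈ Ω there exists θ with ℓᵢ(xᵢ, f̂ᵢ(x₋ᵢ,θ)) = 0. Suppose θᵢᵏ globally minimizes θ ↦ (1/k)Σ_{t=1}^{k} ℓᵢ(xᵢᵗ, f̂ᵢ(x̂₋ᵢᵗ,θ)), and xᵢᵏ → x̄ᵢ, x̂₋ᵢᵏ → x̄₋ᵢ with (x̄ᵢ,x̄₋ᵢ) ∈ Ω, and θᵢᵏ → θ̄ᵢ. Then ℓᵢ(x̄ᵢ, f̂ᵢ(x̄₋ᵢ, θ̄ᵢ)) = 0, i.e., f̂ᵢ(x̄₋ᵢ, θ̄ᵢ) = x̄ᵢ. -/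

import Mathlib

/-!
Write `g(z, θ) = ℓ(z₁, f̂(z₂, θ))`, continuous and nonnegative, and let `θ*` match the limit
sample `z̄`. By Cesàro, the empirical loss at the fixed parameter `θ*` tends to `g(z̄, θ*) = 0`.
If `c = g(z̄, θ̄)` were positive, continuity would give `g(zₜ, θᵏ) ≥ c/2` once `t, k ≥ N`, so
for `k ≥ 2N` at least half of the `k` nonnegative terms of the empirical loss at `θᵏ` exceed
`c/2`; that loss would stay above `c/4` while being at most the one at `θ*`.
-/

open Filter Topology Finset

noncomputable def sampleMean (a : ℕ → ℝ) (k : ℕ) : ℝ :=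
  (1 / (k : ℝ)) * ∑ t ∈ Icc 1 k, a t

lemma sum_Icc_one_eq_sum_range {M : Type*} [AddCommMonoid M] (a : ℕ → M) (k : ℕ) :
    ∑ t ∈ Icc 1 k, a t = ∑ i ∈ range k, a (i + 1) := by
  rw [range_eq_Ico, sum_Ico_add', zero_add, Ico_add_one_right_eq_Icc]

lemma tendsto_sampleMean {a : ℕ → ℝ} {l : ℝ} (ha : Tendsto a atTop (𝓝 l)) :
    Tendsto (sampleMean a) atTop (𝓝 l) := by
  have hshift : Tendsto (fun i => a (i + 1)) atTop (𝓝 l) := ha.comp (tendsto_add_atTop_nat 1)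
  refine hshift.cesaro.congr fun k => ?_
  rw [sampleMean, sum_Icc_one_eq_sum_range, one_div]

lemma eventually_half_le_sampleMean {b : ℕ → ℕ → ℝ} {c : ℝ} (hc : 0 ≤ c)
    (hb : ∀ k t, 0 ≤ b k t) (hlarge : ∀ᶠ p in atTop ×ˢ atTop, c ≤ b p.1 p.2) :
    ∀ᶠ k in atTop, c / 2 ≤ sampleMean (b k) k := by
  rw [prod_atTop_atTop_eq, eventually_atTop_prod_self'] at hlarge
  obtain ⟨N, hN⟩ := hlarge
  filter_upwards [eventually_ge_atTop (2 * N), eventually_ge_atTop 1] with k hk hk1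
  have hkpos : (0 : ℝ) < k := by exact_mod_cast hk1
  have htail : ((k - N : ℕ) : ℝ) * c ≤ ∑ t ∈ Icc 1 k, b k t :=
    calc ((k - N : ℕ) : ℝ) * c = ∑ _t ∈ Icc (N + 1) k, c := by simp
      _ ≤ ∑ t ∈ Icc (N + 1) k, b k t :=
        sum_le_sum fun t ht => hN k (by omega) t (Nat.le_of_succ_le (mem_Icc.1 ht).1)
      _ ≤ ∑ t ∈ Icc 1 k, b k t :=
        sum_le_sum_of_subset_of_nonneg (Icc_subset_Icc_left (by omega)) fun t _ _ => hb k t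
  have hhalf : (k : ℝ) / 2 ≤ ((k - N : ℕ) : ℝ) := by
    rw [Nat.cast_sub (by omega)]
    have : (2 * N : ℝ) ≤ k := by exact_mod_cast hk
    linarith
  rw [sampleMean, div_mul_eq_mul_div, one_mul, le_div_iff₀ hkpos]
  nlinarith

theorem sampleMean_minimizer_limit_eq_zero {Z Θ : Type*} [TopologicalSpace Z]
    [TopologicalSpace Θ] {g : Z → Θ → ℝ} (hg : Continuous fun q : Z × Θ => g q.1 q.2)
    (hg_nonneg : ∀ z θ, 0 ≤ g z θ) {z : ℕ → Z} {θ : ℕ → Θ} {zbar : Z} {θbar θstar : Θ}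
    (hz : Tendsto z atTop (𝓝 zbar)) (hθ : Tendsto θ atTop (𝓝 θbar))
    (hstar : g zbar θstar = 0)
    (hmin : ∀ k, 1 ≤ k → sampleMean (fun t => g (z t) (θ k)) k
      ≤ sampleMean (fun t => g (z t) θstar) k) :
    g zbar θbar = 0 := by
  refine le_antisymm (not_lt.1 fun hpos => ?_) (hg_nonneg _ _)
  set c := g zbar θbar
  have hnear : ∀ᶠ p in atTop ×ˢ atTop, c / 2 ≤ g (z p.2) (θ p.1) := by
    have hjoint : Tendsto (fun p : ℕ × ℕ => g (z p.2) (θ p.1)) (atTop ×ˢ atTop) (𝓝 c) :=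
      (hg.tendsto (zbar, θbar)).comp ((hz.comp tendsto_snd).prodMk_nhds (hθ.comp tendsto_fst))
    exact hjoint.eventually (le_mem_nhds (by linarith))
  have hlow := eventually_half_le_sampleMean (by linarith) (fun k t => hg_nonneg (z t) (θ k)) hnear
  have hhigh : ∀ᶠ k in atTop, sampleMean (fun t => g (z t) θstar) k < c / 4 := by
    have hfixed : Tendsto (fun t => g (z t) θstar) atTop (𝓝 0) := by
      simpa [hstar, Function.comp_def] using
        (hg.tendsto (zbar, θstar)).comp (hz.prodMk_nhds tendsto_const_nhds)
    exact (tendsto_sampleMean hfixed).eventually (gt_mem_nhds (by linarith))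
  obtain ⟨k, ⟨hk1, hlo⟩, hhi⟩ := (((eventually_ge_atTop 1).and hlow).and hhigh).exists
  linarith [hmin k hk1]

theorem empirical_loss_minimizer_consistency_general {ni nmi pi : ℕ}
    (Ω : Set (EuclideanSpace ℝ (Fin ni) × EuclideanSpace ℝ (Fin nmi)))
    (ℓ : EuclideanSpace ℝ (Fin ni) → EuclideanSpace ℝ (Fin ni) → ℝ)
    (hℓcont : Continuous fun q : EuclideanSpace ℝ (Fin ni) × EuclideanSpace ℝ (Fin ni) =>
      ℓ q.1 q.2)
    (hℓnonneg : ∀ u w, 0 ≤ ℓ u w)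
    (hℓzero : ∀ u w, ℓ u w = 0 ↔ u = w)
    (fhat : EuclideanSpace ℝ (Fin nmi) → EuclideanSpace ℝ (Fin pi) →
      EuclideanSpace ℝ (Fin ni))
    (hfcont : Continuous fun q : EuclideanSpace ℝ (Fin nmi) × EuclideanSpace ℝ (Fin pi) =>
      fhat q.1 q.2)
    -- pointwise matching property
    (hmatch : ∀ z ∈ Ω, ∃ θ, ℓ z.1 (fhat z.2 θ) = 0)
    (xi : ℕ → EuclideanSpace ℝ (Fin ni))
    (xhat : ℕ → EuclideanSpace ℝ (Fin nmi))
    (θseq : ℕ → EuclideanSpace ℝ (Fin pi))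
    -- θᵏ is a global minimizer of the k-sample empirical loss
    (hglobal : ∀ k : ℕ, 1 ≤ k → ∀ θ,
      (1 / (k : ℝ)) * ∑ t ∈ Finset.Icc 1 k, ℓ (xi t) (fhat (xhat t) (θseq k))
        ≤ (1 / (k : ℝ)) * ∑ t ∈ Finset.Icc 1 k, ℓ (xi t) (fhat (xhat t) θ))
    (xbari : EuclideanSpace ℝ (Fin ni)) (xbarmi : EuclideanSpace ℝ (Fin nmi))
    (θbar : EuclideanSpace ℝ (Fin pi))
    (hxi : Filter.Tendsto xi Filter.atTop (nhds xbari))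
    (hxhat : Filter.Tendsto xhat Filter.atTop (nhds xbarmi))
    (hfeas : (xbari, xbarmi) ∈ Ω)
    (hθ : Filter.Tendsto θseq Filter.atTop (nhds θbar)) :
    ℓ xbari (fhat xbarmi θbar) = 0 ∧ fhat xbarmi θbar = xbari := by
  obtain ⟨θstar, hθstar⟩ := hmatch (xbari, xbarmi) hfeas
  have hloss : Continuous fun q : (EuclideanSpace ℝ (Fin ni) × EuclideanSpace ℝ (Fin nmi)) ×
      EuclideanSpace ℝ (Fin pi) => ℓ q.1.1 (fhat q.1.2 q.2) := by
    fun_prop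
  have hzero : ℓ xbari (fhat xbarmi θbar) = 0 :=
    sampleMean_minimizer_limit_eq_zero (g := fun z θ => ℓ (Prod.fst z) (fhat (Prod.snd z) θ))
      hloss (fun _ _ => hℓnonneg _ _) (hxi.prodMk_nhds hxhat) hθ hθstar
      fun k hk => hglobal k hk θstar
  exact ⟨hzero, ((hℓzero _ _).1 hzero).symm⟩

theorem empirical_loss_minimizer_consistency {ni nmi pi : ℕ}
    (Ω : Set (EuclideanSpace ℝ (Fin ni) × EuclideanSpace ℝ (Fin nmi)))
    (ℓ : EuclideanSpace ℝ (Fin ni) → EuclideanSpace ℝ (Fin ni) → ℝ)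
    (hℓcont : Continuous fun q : EuclideanSpace ℝ (Fin ni) × EuclideanSpace ℝ (Fin ni) =>
      ℓ q.1 q.2)
    (hℓnonneg : ∀ u w, 0 ≤ ℓ u w)
    (hℓzero : ∀ u w, ℓ u w = 0 ↔ u = w)
    (fhat : EuclideanSpace ℝ (Fin nmi) → EuclideanSpace ℝ (Fin pi) →
      EuclideanSpace ℝ (Fin ni))
    (hfcont : Continuous fun q : EuclideanSpace ℝ (Fin nmi) × EuclideanSpace ℝ (Fin pi) =>
      fhat q.1 q.2)
    -- pointwise matching property
    (hmatch : ∀ z ∈ Ω, ∃ θ, ℓ z.1 (fhat z.2 θ) = 0)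
    (xi : ℕ → EuclideanSpace ℝ (Fin ni))
    (xhat : ℕ → EuclideanSpace ℝ (Fin nmi))
    (θseq : ℕ → EuclideanSpace ℝ (Fin pi))
    -- θᵏ is a global minimizer of the k-sample empirical loss
    (hglobal : ∀ k : ℕ, 1 ≤ k → ∀ θ,
      (1 / (k : ℝ)) * ∑ t ∈ Finset.Icc 1 k, ℓ (xi t) (fhat (xhat t) (θseq k))
        ≤ (1 / (k : ℝ)) * ∑ t ∈ Finset.Icc 1 k, ℓ (xi t) (fhat (xhat t) θ))
    (hsamples : ∀ t, (xi t, xhat t) ∈ Ω)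
    (xbari : EuclideanSpace ℝ (Fin ni)) (xbarmi : EuclideanSpace ℝ (Fin nmi))
    (θbar : EuclideanSpace ℝ (Fin pi))
    (hxi : Filter.Tendsto xi Filter.atTop (nhds xbari))
    (hxhat : Filter.Tendsto xhat Filter.atTop (nhds xbarmi))
    (hfeas : (xbari, xbarmi) ∈ Ω)
    (hθ : Filter.Tendsto θseq Filter.atTop (nhds θbar)) :
    ℓ xbari (fhat xbarmi θbar) = 0 ∧ fhat xbarmi θbar = xbari :=
  empirical_loss_minimizer_consistency_general Ω ℓ hℓcont hℓnonneg hℓzero fhat hfcont hmatch xi xhat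
    θseq hglobal xbari xbarmi θbar hxi hxhat hfeas hθ
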